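/- For every point a ∈ ℝ^n, the tropical convex hull of the ray pos(a) = {t·a : t ≥ 0} equals the set of all finite nonnegative linear combinations of points of tconv({0, a}); that is, tconv(pos(a)) = pos(tconv({0, a})), where pos(S) denotes the convex conical hull (all finite nonnegative combinations) of S. -/

import Mathlib

/-- A set `U ⊆ ℝ^n` is tropically convex (min-plus convention). -/
def TropConvex {n : ℕ} (U : Set (Fin n → ℝ)) : Prop :=
  ∀ x ∈ U, ∀ y ∈ U, ∀ a b : ℝ, min a b = 0 →
    (fun i => min (a + x i) (b + y i)) ∈ U

/-- The tropical convex hull: the intersection of all tropically convex sets containing `U`. -/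
def tconv {n : ℕ} (U : Set (Fin n → ℝ)) : Set (Fin n → ℝ) :=
  ⋂₀ {V | TropConvex V ∧ U ⊆ V}

/-- The set of all finite nonnegative real linear combinations of elements of `S`. -/
def posHull {n : ℕ} (S : Set (Fin n → ℝ)) : Set (Fin n → ℝ) :=
  {x | ∃ (k : ℕ) (c : Fin k → ℝ) (v : Fin k → Fin n → ℝ),
    (∀ i, 0 ≤ c i) ∧ (∀ i, v i ∈ S) ∧ x = ∑ i, c i • v i}

/-!
The vectors `φ ∘ a` with `φ : ℝ → ℝ` concave, nondecreasing and `φ 0 = 0` form a tropically convex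
set containing the ray, hence containing its `tconv`. On the finite set `{0} ∪ {aᵢ}` every such `φ`
is a nonnegative combination of hinges `s ↦ min b s - min b 0`, and each hinge evaluated at `a`
lies on the tropical segment `tconv {0, a}`. Conversely, `tconv` of a convex cone is again a convex
cone, so it contains `posHull (tconv {0, a})`.
-/

section TropicalConvexity

variable {n : ℕ}

theorem subset_tconv (U : Set (Fin n → ℝ)) : U ⊆ tconv U :=
  fun _ hx _ hV => hV.2 hx

theorem tconv_subset {U V : Set (Fin n → ℝ)} (hV : TropConvex V) (hUV : U ⊆ V) : tconv U ⊆ V :=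
  fun _ hx => hx V ⟨hV, hUV⟩

theorem tropConvex_tconv (U : Set (Fin n → ℝ)) : TropConvex (tconv U) :=
  fun x hx y hy a b hab V hV => hV.1 x (hx V hV) y (hy V hV) a b hab

theorem tconv_mono {U V : Set (Fin n → ℝ)} (h : U ⊆ V) : tconv U ⊆ tconv V :=
  tconv_subset (tropConvex_tconv V) (h.trans (subset_tconv V))

theorem TropConvex.min_add_sub_min_mem {U : Set (Fin n → ℝ)} (hU : TropConvex U)
    {x y : Fin n → ℝ} (hx : x ∈ U) (hy : y ∈ U) (a b : ℝ) :
    (fun i => min (a + x i) (b + y i) - min a b) ∈ U := by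
  have h := hU x hx y hy (a - min a b) (b - min a b) (by rw [min_sub_sub_right, sub_self])
  convert h using 2 with i
  rw [← min_sub_sub_right]
  ring_nf

theorem TropConvex.preimage_add_right {U : Set (Fin n → ℝ)} (hU : TropConvex U)
    (z : Fin n → ℝ) : TropConvex ((· + z) ⁻¹' U) := by
  intro x hx y hy a b hab
  rw [Set.mem_preimage]
  convert hU _ hx _ hy a b hab using 2 with i
  simp only [Pi.add_apply, ← add_assoc, min_add_add_right]

theorem TropConvex.preimage_smul {U : Set (Fin n → ℝ)} (hU : TropConvex U) {c : ℝ}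
    (hc : 0 ≤ c) : TropConvex ((c • ·) ⁻¹' U) := by
  intro x hx y hy a b hab
  rw [Set.mem_preimage]
  convert hU _ hx _ hy (c * a) (c * b) (by rw [← mul_min_of_nonneg _ _ hc, hab, mul_zero])
    using 2 with i
  simp only [Pi.smul_apply, smul_eq_mul, mul_min_of_nonneg _ _ hc, mul_add]

theorem add_mem_tconv {U : Set (Fin n → ℝ)} (hU : ∀ x ∈ U, ∀ y ∈ U, x + y ∈ U)
    {x y : Fin n → ℝ} (hx : x ∈ tconv U) (hy : y ∈ tconv U) : x + y ∈ tconv U := by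
  have hright : ∀ z ∈ U, ∀ w ∈ tconv U, w + z ∈ tconv U := fun z hz =>
    tconv_subset ((tropConvex_tconv U).preimage_add_right z)
      fun w hw => subset_tconv U (hU w hw z hz)
  refine tconv_subset ((tropConvex_tconv U).preimage_add_right y) (fun z hz => ?_) hx
  simpa only [Set.mem_preimage, add_comm] using hright z hz y hy

theorem smul_mem_tconv {U : Set (Fin n → ℝ)} {c : ℝ} (hc : 0 ≤ c)
    (hU : ∀ x ∈ U, c • x ∈ U) {x : Fin n → ℝ} (hx : x ∈ tconv U) : c • x ∈ tconv U :=
  tconv_subset ((tropConvex_tconv U).preimage_smul hc)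
    (fun y hy => subset_tconv U (hU y hy)) hx

end TropicalConvexity

section PositiveHull

variable {n : ℕ}

theorem posHull_subset {S C : Set (Fin n → ℝ)} (hzero : 0 ∈ C)
    (hadd : ∀ x ∈ C, ∀ y ∈ C, x + y ∈ C) (hsmul : ∀ c : ℝ, 0 ≤ c → ∀ x ∈ C, c • x ∈ C)
    (hS : S ⊆ C) : posHull S ⊆ C := by
  rintro x ⟨k, c, v, hc, hv, rfl⟩
  exact Finset.sum_induction _ (· ∈ C) (fun x y hx hy => hadd x hx y hy) hzero fun i _ => hsmul _ (hc i) _ (hS (hv i))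

theorem sum_smul_mem_posHull {S : Set (Fin n → ℝ)} {ι : Type*} (s : Finset ι) {c : ι → ℝ}
    {v : ι → Fin n → ℝ} (hc : ∀ i ∈ s, 0 ≤ c i) (hv : ∀ i ∈ s, v i ∈ S) :
    ∑ i ∈ s, c i • v i ∈ posHull S := by
  refine ⟨s.card, fun j => c (s.equivFin.symm j), fun j => v (s.equivFin.symm j),
    fun j => hc _ (s.equivFin.symm j).2, fun j => hv _ (s.equivFin.symm j).2, ?_⟩
  rw [← s.sum_coe_sort, ← s.equivFin.symm.sum_comp]

end PositiveHull

section ConcaveDecomposition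

variable {D : Set ℝ} {φ : ℝ → ℝ}

theorem ConcaveOn.slope_anti_of_le (hφ : ConcaveOn ℝ D φ) {u v w z : ℝ} (hu : u ∈ D)
    (hv : v ∈ D) (hz : z ∈ D) (huv : u < v) (hvw : v ≤ w) (hwz : w < z) :
    (φ z - φ w) / (z - w) ≤ (φ v - φ u) / (v - u) := by
  rcases hvw.eq_or_lt with rfl | hvw
  · exact hφ.slope_anti_adjacent hu hz huv hwz
  · have hw : w ∈ D := hφ.1.ordConnected.out hv hz ⟨hvw.le, hwz.le⟩
    exact (hφ.slope_anti_adjacent hv hz hvw hwz).trans (hφ.slope_anti_adjacent hu hw huv hvw)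

theorem ConcaveOn.exists_eq_add_sum_mul_min (hφ : ConcaveOn ℝ D φ) {S : Finset ℝ}
    (hSD : ↑S ⊆ D) (hmono : MonotoneOn φ S) :
    ∃ c : ℝ, ∃ μ : ℝ → ℝ, (∀ b, 0 ≤ μ b) ∧ ∀ t ∈ S, φ t = c + ∑ b ∈ S, μ b * min b t := by
  classical
  induction S using Finset.induction_on_max generalizing φ with
  | empty => exact ⟨0, 0, fun _ => le_rfl, by simp⟩
  | insert M s hlt ih =>
    rcases s.eq_empty_or_nonempty with rfl | hs
    · exact ⟨φ M, 0, fun _ => le_rfl, by simp⟩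
    set M' := s.max' hs
    have hM' : M' ∈ s := s.max'_mem hs
    have hM'M : M' < M := hlt _ hM'
    have hMs : M ∉ s := fun h => (hlt M h).false
    have hMD : M ∈ D := hSD (Finset.mem_insert_self M s)
    have hsD : ↑s ⊆ D := fun t ht => hSD (Finset.mem_insert_of_mem ht)
    -- Peel off the last secant slope `σ` with the hinge `min M ·`: what remains agrees at `M'`
    -- and `M`, and stays monotone on `s` by concavity.
    set σ := (φ M - φ M') / (M - M')
    have hσ : 0 ≤ σ := div_nonneg
      (sub_nonneg.2 (hmono (Finset.mem_insert_of_mem hM') (Finset.mem_insert_self M s) hM'M.le))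
      (sub_nonneg.2 hM'M.le)
    have hψ : ConcaveOn ℝ D (fun t => φ t - σ * t) :=
      hφ.sub ((convexOn_id hφ.1).smul hσ)
    have hψmono : MonotoneOn (fun t => φ t - σ * t) s := by
      intro u hu v hv huv
      rcases huv.eq_or_lt with rfl | huv
      · exact le_rfl
      have hslope : σ ≤ (φ v - φ u) / (v - u) := hφ.slope_anti_of_le (hsD hu) (hsD hv) hMD huv
        (s.le_max' v hv) hM'M
      rw [le_div_iff₀ (sub_pos.2 huv)] at hslope
      simp only
      linarith
    obtain ⟨c, μ, hμ, hrep⟩ := ih hψ hsD hψmono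
    refine ⟨c, Function.update μ M σ, ?_, fun t ht => ?_⟩
    · intro b
      rcases eq_or_ne b M with rfl | hb
      · simpa using hσ
      · simpa [hb] using hμ b
    rw [Finset.sum_insert hMs, Function.update_self,
      Finset.sum_congr rfl fun b hb => by rw [Function.update_of_ne (hlt b hb).ne]]
    rcases Finset.mem_insert.1 ht with rfl | ht
    · have hflat : ∑ b ∈ s, μ b * min b t = ∑ b ∈ s, μ b * min b M' :=
        Finset.sum_congr rfl fun b hb => by
          rw [min_eq_left (hlt b hb).le, min_eq_left (s.le_max' b hb)]
      have hσM : σ * (t - M') = φ t - φ M' := div_mul_cancel₀ _ (sub_pos.2 hM'M).ne'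
      rw [hflat, min_self]
      linarith [hrep M' hM']
    · rw [min_eq_right (hlt t ht).le]
      linarith [hrep t ht]

end ConcaveDecomposition

section Ray

variable {n : ℕ}

def concaveMonotoneComp (a : Fin n → ℝ) : Set (Fin n → ℝ) :=
  {x | ∃ φ : ℝ → ℝ, ConcaveOn ℝ Set.univ φ ∧ Monotone φ ∧ φ 0 = 0 ∧ x = φ ∘ a}

theorem tropConvex_concaveMonotoneComp (a : Fin n → ℝ) :
    TropConvex (concaveMonotoneComp a) := by
  rintro _ ⟨φ, hφ, hφm, hφ0, rfl⟩ _ ⟨ψ, hψ, hψm, hψ0, rfl⟩ α β hαβ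
  refine ⟨(φ + fun _ => α) ⊓ (ψ + fun _ => β), (hφ.add_const α).inf (hψ.add_const β),
    (hφm.add_const α).inf (hψm.add_const β), by simpa [hφ0, hψ0] using hαβ, ?_⟩
  ext i
  simp [add_comm]

theorem smul_mem_concaveMonotoneComp (a : Fin n → ℝ) {t : ℝ} (ht : 0 ≤ t) :
    t • a ∈ concaveMonotoneComp a :=
  ⟨(t * ·), (concaveOn_id convex_univ).smul ht, fun _ _ h => mul_le_mul_of_nonneg_left h ht,
    mul_zero t, rfl⟩

theorem concaveMonotoneComp_subset_posHull (a : Fin n → ℝ) :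
    concaveMonotoneComp a ⊆ posHull (tconv {0, a}) := by
  classical
  rintro _ ⟨φ, hφ, hφm, hφ0, rfl⟩
  set S : Finset ℝ := insert 0 (Finset.univ.image a)
  obtain ⟨c, μ, hμ, hrep⟩ := hφ.exists_eq_add_sum_mul_min (S := S) (Set.subset_univ _)
    (hφm.monotoneOn _)
  have hgen (b : ℝ) : (fun i => min b (a i) - min b 0) ∈ tconv {0, a} := by
    simpa using (tropConvex_tconv _).min_add_sub_min_mem (subset_tconv {0, a} (Set.mem_insert 0 _))
      (subset_tconv {0, a} (Set.mem_insert_of_mem 0 (Set.mem_singleton a))) b 0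
  convert sum_smul_mem_posHull S (fun b _ => hμ b) (fun b _ => hgen b) using 1
  ext i
  have h0 := hrep 0 (Finset.mem_insert_self _ _)
  have hi := hrep (a i) (Finset.mem_insert_of_mem (Finset.mem_image_of_mem a (Finset.mem_univ i)))
  simp only [Function.comp_apply, Finset.sum_apply, Pi.smul_apply, smul_eq_mul, mul_sub, Finset.sum_sub_distrib]
  linarith

end Ray

theorem tconv_ray_eq_posHull_tconv (n : ℕ) (a : Fin n → ℝ) :
    tconv {x : Fin n → ℝ | ∃ t : ℝ, 0 ≤ t ∧ x = t • a} =
      posHull (tconv {(0 : Fin n → ℝ), a}) := by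
  set ray := {x : Fin n → ℝ | ∃ t : ℝ, 0 ≤ t ∧ x = t • a}
  have hray_add : ∀ x ∈ ray, ∀ y ∈ ray, x + y ∈ ray := by
    rintro _ ⟨s, hs, rfl⟩ _ ⟨t, ht, rfl⟩
    exact ⟨s + t, add_nonneg hs ht, (add_smul s t a).symm⟩
  have hray_smul : ∀ c : ℝ, 0 ≤ c → ∀ x ∈ ray, c • x ∈ ray := by
    rintro c hc _ ⟨t, ht, rfl⟩
    exact ⟨c * t, mul_nonneg hc ht, smul_smul c t a⟩
  have hzero : (0 : Fin n → ℝ) ∈ ray := ⟨0, le_rfl, (zero_smul ℝ a).symm⟩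
  have hone : a ∈ ray := ⟨1, zero_le_one, (one_smul ℝ a).symm⟩
  apply Set.Subset.antisymm
  · refine (tconv_subset (tropConvex_concaveMonotoneComp a) ?_).trans
      (concaveMonotoneComp_subset_posHull a)
    rintro _ ⟨t, ht, rfl⟩
    exact smul_mem_concaveMonotoneComp a ht
  · exact posHull_subset (subset_tconv ray hzero) (fun x hx y hy => add_mem_tconv hray_add hx hy)
      (fun c hc x hx => smul_mem_tconv hc (hray_smul c hc) hx)
      (tconv_mono (Set.insert_subset hzero (Set.singleton_subset_iff.2 hone)))
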